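/- arXiv:1911.05456 — 13 statements merged into one kernel-verified Lean document; each statement's English description precedes it below -/
import Mathlib

section
/- For all nonzero integers m and all nonnegative integers n, the sum over k from 0 to n of ((64-m)k^3 - 32k^2 - 16k + 8) * C(2k,k)^3 / ((2k-1)^2 * m^k) equals 8(2n+1) * C(2n,n)^3 / m^n. -/
/-!
The summand is the forward difference of `8 (2n+1) C(2n,n)^3 / m^n` (a Gosper-type certificate):
after clearing denominators, the step `k = n + 1` reduces to the polynomial identity
`8 (2u+1) (2u-1)^2 = 64u^3 - 32u^2 - 16u + 8` together with the recurrence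
`(n+1) C(2n+2,n+1) = 2 (2n+1) C(2n,n)`. The sum therefore telescopes.
-/

namespace CentralBinomCubeSum

open Finset Nat

variable {K : Type*} [Field K]

def summand (x : K) (k : ℕ) : K :=
  ((64 - x) * k ^ 3 - 32 * k ^ 2 - 16 * k + 8) * (centralBinom k : K) ^ 3 /
    ((2 * (k : K) - 1) ^ 2 * x ^ k)

def closedForm (x : K) (n : ℕ) : K :=
  8 * (2 * (n : K) + 1) * (centralBinom n : K) ^ 3 / x ^ n

theorem summand_zero (x : K) : summand x 0 = closedForm x 0 := by
  norm_num [summand, closedForm]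

theorem cast_succ_mul_centralBinom_succ (n : ℕ) :
    ((n : K) + 1) * centralBinom (n + 1) = 2 * (2 * n + 1) * centralBinom n := by
  simpa using congrArg (Nat.cast : ℕ → K) (succ_mul_centralBinom_succ n)

theorem summand_succ [CharZero K] {x : K} (hx : x ≠ 0) (n : ℕ) :
    summand x (n + 1) = closedForm x (n + 1) - closedForm x n := by
  have hrec := cast_succ_mul_centralBinom_succ (K := K) n
  have hodd : 2 * (n : K) + 1 ≠ 0 := mod_cast (2 * n).succ_ne_zero
  simp only [summand, closedForm, Nat.cast_add_one]
  rw [show 2 * ((n : K) + 1) - 1 = 2 * n + 1 by ring]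
  generalize (centralBinom n : K) = c at *
  generalize (centralBinom (n + 1) : K) = b at *
  have hcube : ((n : K) + 1) ^ 3 * b ^ 3 = 8 * (2 * n + 1) ^ 3 * c ^ 3 := by
    linear_combination ((n + 1) ^ 2 * b ^ 2 + 2 * (n + 1) * (2 * n + 1) * b * c
      + 4 * (2 * n + 1) ^ 2 * c ^ 2) * hrec
  rw [div_sub_div _ _ (pow_ne_zero _ hx) (pow_ne_zero _ hx),
    div_eq_div_iff (by simp [hodd, hx]) (by simp [hx])]
  linear_combination -(x * x ^ (n + 1) * x ^ n) * hcube

theorem sum_range_summand [CharZero K] {x : K} (hx : x ≠ 0) (n : ℕ) :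
    ∑ k ∈ range (n + 1), summand x k = closedForm x n := by
  rw [sum_range_succ', sum_congr rfl fun k _ => summand_succ hx k, sum_range_sub, summand_zero]
  ring

end CentralBinomCubeSum

theorem stmt_1 (m : ℤ) (hm : m ≠ 0) (n : ℕ) :
    ∑ k ∈ Finset.range (n + 1),
      (((64 - (m : ℚ)) * k ^ 3 - 32 * k ^ 2 - 16 * k + 8) * ((2 * k).choose k : ℚ) ^ 3) /
        ((2 * (k : ℚ) - 1) ^ 2 * (m : ℚ) ^ k)
      = 8 * (2 * (n : ℚ) + 1) * ((2 * n).choose n : ℚ) ^ 3 / (m : ℚ) ^ n :=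
  CentralBinomCubeSum.sum_range_summand (Int.cast_ne_zero.mpr hm) n
end

section
/- For all nonzero integers m and all nonnegative integers n, the sum over k from 0 to n of ((64-m)k^3 - 96k^2 + 48k - 8) * C(2k,k)^3 / ((2k-1)^3 * m^k) equals 8 * C(2n,n)^3 / m^n. -/
theorem stmt_2 (m : ℤ) (hm : m ≠ 0) (n : ℕ) :
    ∑ k ∈ Finset.range (n + 1),
      (((64 - (m : ℚ)) * k ^ 3 - 96 * k ^ 2 + 48 * k - 8) * ((2 * k).choose k : ℚ) ^ 3) /
        ((2 * (k : ℚ) - 1) ^ 3 * (m : ℚ) ^ k)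
      = 8 * ((2 * n).choose n : ℚ) ^ 3 / (m : ℚ) ^ n := by
  have hmq : (m : ℚ) ≠ 0 := Int.cast_ne_zero.mpr hm
  induction n with
  | zero => norm_num
  | succ n ih =>
    rw [Finset.sum_range_succ, ih]
    have hN : ((n + 1) * (2 * (n + 1)).choose (n + 1) : ℕ)
        = 2 * (2 * n + 1) * (2 * n).choose n := by
      have := Nat.succ_mul_centralBinom_succ n
      simpa [Nat.centralBinom, Nat.mul_succ, Nat.succ_eq_add_one] using this
    have hc : (((n : ℚ) + 1)) * ((2 * (n + 1)).choose (n + 1) : ℚ)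
        = 2 * (2 * (n : ℚ) + 1) * ((2 * n).choose n : ℚ) := by
      exact_mod_cast congrArg (Nat.cast : ℕ → ℚ) hN
    have hn1 : ((n : ℚ) + 1) ≠ 0 := by positivity
    have hC' : ((2 * (n + 1)).choose (n + 1) : ℚ)
        = 2 * (2 * (n : ℚ) + 1) * ((2 * n).choose n : ℚ) / ((n : ℚ) + 1) := by
      field_simp
      linarith [hc]
    have h2n1 : (2 * ((n : ℚ) + 1) - 1) ≠ 0 := by
      intro h; nlinarith [h]
    push_cast
    rw [hC', show (2 * ((n : ℚ) + 1) - 1) = 2 * (n : ℚ) + 1 by ring]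
    field_simp
    ring
end

section
/- For all nonzero integers m and all nonnegative integers n, the sum over k from 0 to n of ((108-m)k^3 - 54k^2 - 12k + 6) * C(2k,k)^2 * C(3k,k) / ((2k-1)(3k-1) * m^k) equals 6(3n+1) * C(2n,n)^2 * C(3n,n) / m^n. -/
lemma aux2 (n : ℕ) : ((2 * (n + 1)).choose (n + 1) : ℚ) * (n + 1)
    = 2 * (2 * n + 1) * ((2 * n).choose n : ℚ) := by
  have h := Nat.succ_mul_centralBinom_succ n
  have : ((n + 1) * Nat.centralBinom (n + 1) : ℚ) = (2 * (2 * n + 1) * Nat.centralBinom n : ℚ) := by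
    exact_mod_cast congrArg (Nat.cast : ℕ → ℚ) h
  unfold Nat.centralBinom at this
  push_cast at this ⊢
  linarith

lemma aux3 (n : ℕ) : ((3 * (n + 1)).choose (n + 1) : ℚ) * ((n + 1) * (2 * n + 1) * (2 * n + 2))
    = ((3 * n).choose n : ℚ) * ((3 * n + 1) * (3 * n + 2) * (3 * n + 3)) := by
  have h1 : n ≤ 3 * n := by omega
  have h2 : n + 1 ≤ 3 * (n + 1) := by omega
  rw [Nat.cast_choose ℚ h1, Nat.cast_choose ℚ h2]
  have e1 : 3 * (n + 1) = 3 * n + 3 := by omega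
  have e2 : 3 * n + 3 - (n + 1) = 2 * n + 2 := by omega
  have e3 : 3 * n - n = 2 * n := by omega
  rw [e1, e2, e3]
  have F1 : ((3 * n + 3).factorial : ℚ)
      = (3 * n + 3) * ((3 * n + 2)) * ((3 * n + 1)) * ((3 * n).factorial) := by
    have : (3 * n + 3).factorial = (3 * n + 3) * ((3 * n + 2) * ((3 * n + 1) * (3 * n).factorial)) := rfl
    rw [this]; push_cast; ring
  have F2 : ((2 * n + 2).factorial : ℚ) = (2 * n + 2) * (2 * n + 1) * ((2 * n).factorial) := by
    have : (2 * n + 2).factorial = (2 * n + 2) * ((2 * n + 1) * (2 * n).factorial) := rfl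
    rw [this]; push_cast; ring
  have F3 : ((n + 1).factorial : ℚ) = (n + 1) * (n.factorial) := by
    have : (n + 1).factorial = (n + 1) * n.factorial := rfl
    rw [this]; push_cast; ring
  rw [F1, F2, F3]
  have g1 : ((3 * n).factorial : ℚ) ≠ 0 := by exact_mod_cast (Nat.factorial_pos _).ne'
  have g2 : ((n).factorial : ℚ) ≠ 0 := by exact_mod_cast (Nat.factorial_pos _).ne'
  have g3 : ((2 * n).factorial : ℚ) ≠ 0 := by exact_mod_cast (Nat.factorial_pos _).ne'
  have hn1 : ((n : ℚ) + 1) ≠ 0 := by positivity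
  have hn2 : (2 * (n : ℚ) + 1) ≠ 0 := by positivity
  have hn3 : (2 * (n : ℚ) + 2) ≠ 0 := by positivity
  field_simp

theorem stmt_3 (m : ℤ) (hm : m ≠ 0) (n : ℕ) :
    ∑ k ∈ Finset.range (n + 1),
      (((108 - (m : ℚ)) * k ^ 3 - 54 * k ^ 2 - 12 * k + 6) *
          ((2 * k).choose k : ℚ) ^ 2 * ((3 * k).choose k : ℚ)) /
        ((2 * (k : ℚ) - 1) * (3 * (k : ℚ) - 1) * (m : ℚ) ^ k)
      = 6 * (3 * (n : ℚ) + 1) * ((2 * n).choose n : ℚ) ^ 2 * ((3 * n).choose n : ℚ) / (m : ℚ) ^ n := by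
  have hmq : (m : ℚ) ≠ 0 := by exact_mod_cast hm
  induction n with
  | zero => norm_num
  | succ n ih =>
    rw [Finset.sum_range_succ, ih]
    have h2 := aux2 n
    have h3 := aux3 n
    have hn1 : ((n : ℚ) + 1) ≠ 0 := by positivity
    have hn2 : (2 * (n : ℚ) + 1) ≠ 0 := by positivity
    have hn3 : (2 * (n : ℚ) + 2) ≠ 0 := by positivity
    have hn4 : (3 * (n : ℚ) + 2) ≠ 0 := by positivity
    have hpm : (m : ℚ) ^ n ≠ 0 := pow_ne_zero _ hmq
    push_cast at h2 h3 ⊢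
    have e2 : ((2 * (n + 1)).choose (n + 1) : ℚ) = 2 * (2 * n + 1) * ((2 * n).choose n : ℚ) / (n + 1) := by
      field_simp at h2 ⊢; push_cast; linarith
    have e3 : ((3 * (n + 1)).choose (n + 1) : ℚ)
        = ((3 * n).choose n : ℚ) * ((3 * n + 1) * (3 * n + 2) * (3 * n + 3)) / ((n + 1) * (2 * n + 1) * (2 * n + 2)) := by
      rw [eq_div_iff (by positivity)]; push_cast; linarith [h3]
    rw [e2, e3]
    have hden : (2 * ((n : ℚ) + 1) - 1) ≠ 0 := by
      have : (2 * ((n : ℚ) + 1) - 1) = 2 * n + 1 := by ring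
      rw [this]; exact hn2
    have hden2 : (3 * ((n : ℚ) + 1) - 1) ≠ 0 := by
      have : (3 * ((n : ℚ) + 1) - 1) = 3 * n + 2 := by ring
      rw [this]; exact hn4
    field_simp
    rw [show ((n : ℚ) + 1) * 2 - 1 = 2 * n + 1 by ring]
    field_simp
    ring
end

section
/- For all nonzero integers m and all nonnegative integers n, the sum over k from 0 to n of ((256-m)k^3 - 128k^2 - 16k + 8) * C(2k,k)^2 * C(4k,2k) / ((2k-1)(4k-1) * m^k) equals 8(4n+1) * C(2n,n)^2 * C(4n,2n) / m^n. -/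
/-!
The sum telescopes (Gosper): with `a k = C(2k,k)^2 C(4k,2k)` and `F n = 8 (4n+1) a n / m^n`, the
`k`-th summand equals `F k - F (k-1)` for `k ≥ 1`, and `F 0 = 8` is the `0`-th summand. The
telescoping step is a polynomial identity once `a (k+1)` is eliminated through the hypergeometric
recurrence `(k+1)^3 a (k+1) = 8 (2k+1) (4k+1) (4k+3) a k`.
-/

open Finset Nat

def ramanujanCoeff (k : ℕ) : ℕ := centralBinom k ^ 2 * centralBinom (2 * k)

theorem ramanujanCoeff_succ_mul (k : ℕ) :
    ramanujanCoeff (k + 1) * (k + 1) ^ 3 =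
      8 * (2 * k + 1) * (4 * k + 1) * (4 * k + 3) * ramanujanCoeff k := by
  have h₁ := succ_mul_centralBinom_succ k
  have h₂ := succ_mul_centralBinom_succ (2 * k)
  have h₃ := succ_mul_centralBinom_succ (2 * k + 1)
  rw [ramanujanCoeff, ramanujanCoeff, show 2 * (k + 1) = 2 * k + 1 + 1 by ring]
  -- `centralBinom (2k+2)` is reached from `centralBinom (2k)` through `centralBinom (2k+1)`,
  -- which introduces the factor `2k+1`.
  apply Nat.eq_of_mul_eq_mul_left (show 0 < 2 * (2 * k + 1) by positivity)
  zify at *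
  linear_combination
    (centralBinom (k + 1) : ℤ) ^ 2 * (k + 1) ^ 2 * (2 * k + 1) * h₃ +
    2 * (4 * k + 3) * (centralBinom (k + 1) : ℤ) ^ 2 * (k + 1) ^ 2 * h₂ +
    4 * (4 * k + 3) * (4 * k + 1) * (centralBinom (2 * k) : ℤ) *
      ((k + 1) * centralBinom (k + 1) + 2 * (2 * k + 1) * centralBinom k) * h₁

theorem cast_ramanujanCoeff {R : Type*} [Semiring R] (k : ℕ) :
    (ramanujanCoeff k : R) = ((2 * k).choose k : R) ^ 2 * ((4 * k).choose (2 * k) : R) := by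
  rw [ramanujanCoeff, show 4 * k = 2 * (2 * k) by ring]
  push_cast [centralBinom]
  rfl

section

variable {K : Type*} [Field K] [CharZero K]

def ramanujanSummand (x : K) (k : ℕ) : K :=
  ((256 - x) * k ^ 3 - 128 * k ^ 2 - 16 * k + 8) * ramanujanCoeff k /
    ((2 * (k : K) - 1) * (4 * (k : K) - 1) * x ^ k)

def ramanujanPartialSum (x : K) (n : ℕ) : K :=
  8 * (4 * (n : K) + 1) * ramanujanCoeff n / x ^ n

theorem ramanujanSummand_zero (x : K) : ramanujanSummand x 0 = ramanujanPartialSum x 0 := by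
  simp [ramanujanSummand, ramanujanPartialSum, ramanujanCoeff]

theorem ramanujanSummand_succ {x : K} (hx : x ≠ 0) (k : ℕ) :
    ramanujanSummand x (k + 1) = ramanujanPartialSum x (k + 1) - ramanujanPartialSum x k := by
  have hrec : (ramanujanCoeff (k + 1) : K) * (k + 1) ^ 3 =
      8 * (2 * k + 1) * (4 * k + 1) * (4 * k + 3) * ramanujanCoeff k := by
    exact_mod_cast ramanujanCoeff_succ_mul k
  have h₁ : (2 * k + 1 : K) ≠ 0 := by exact_mod_cast (2 * k).succ_ne_zero
  have h₂ : (4 * k + 3 : K) ≠ 0 := by exact_mod_cast (4 * k + 2).succ_ne_zero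
  simp only [ramanujanSummand, ramanujanPartialSum]
  push_cast
  rw [show 2 * ((k : K) + 1) - 1 = 2 * k + 1 by ring, show 4 * ((k : K) + 1) - 1 = 4 * k + 3 by ring,
    div_sub_div _ _ (pow_ne_zero _ hx) (pow_ne_zero _ hx),
    div_eq_div_iff (by simp [h₁, h₂, hx]) (by simp [hx]), pow_succ x k]
  linear_combination -x * x * x ^ k * x ^ k * hrec

theorem sum_range_succ_ramanujanSummand {x : K} (hx : x ≠ 0) (n : ℕ) :
    ∑ k ∈ range (n + 1), ramanujanSummand x k = ramanujanPartialSum x n := by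
  induction n with
  | zero => simp [ramanujanSummand_zero]
  | succ n ih => rw [sum_range_succ, ih, ramanujanSummand_succ hx]; ring

end

theorem stmt_4 (m : ℤ) (hm : m ≠ 0) (n : ℕ) :
    ∑ k ∈ Finset.range (n + 1),
      (((256 - (m : ℚ)) * k ^ 3 - 128 * k ^ 2 - 16 * k + 8) *
          ((2 * k).choose k : ℚ) ^ 2 * ((4 * k).choose (2 * k) : ℚ)) /
        ((2 * (k : ℚ) - 1) * (4 * (k : ℚ) - 1) * (m : ℚ) ^ k)
      = 8 * (4 * (n : ℚ) + 1) * ((2 * n).choose n : ℚ) ^ 2 * ((4 * n).choose (2 * n) : ℚ) / (m : ℚ) ^ n := by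
  have h := sum_range_succ_ramanujanSummand (x := (m : ℚ)) (by exact_mod_cast hm) n
  simpa only [ramanujanSummand, ramanujanPartialSum, cast_ramanujanCoeff, mul_assoc] using h
end

section
/- For all nonzero integers m and all nonnegative integers n, the sum over k from 0 to n of ((1728-m)k^3 - 864k^2 - 48k + 24) * C(2k,k) * C(3k,k) * C(6k,3k) / ((2k-1)(6k-1) * m^k) equals 24(6n+1) * C(2n,n) * C(3n,n) * C(6n,3n) / m^n. -/
lemma key_stmt_5 (n : ℕ) :
    ((n:ℚ)+1)^3 * ((2*(n+1)).choose (n+1) : ℚ) * ((3*(n+1)).choose (n+1) : ℚ) *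
      ((6*(n+1)).choose (3*(n+1)) : ℚ)
    = 24*(6*(n:ℚ)+1)*(2*(n:ℚ)+1)*(6*(n:ℚ)+5) * ((2*n).choose n : ℚ) * ((3*n).choose n : ℚ) *
      ((6*n).choose (3*n) : ℚ) := by
  have h1 := Nat.cast_choose ℚ (show n ≤ 2*n by omega)
  have h2 := Nat.cast_choose ℚ (show n ≤ 3*n by omega)
  have h3 := Nat.cast_choose ℚ (show 3*n ≤ 6*n by omega)
  have h4 := Nat.cast_choose ℚ (show n+1 ≤ 2*(n+1) by omega)
  have h5 := Nat.cast_choose ℚ (show n+1 ≤ 3*(n+1) by omega)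
  have h6 := Nat.cast_choose ℚ (show 3*(n+1) ≤ 6*(n+1) by omega)
  have e1 : 2*n - n = n := by omega
  have e2 : 3*n - n = 2*n := by omega
  have e3 : 6*n - 3*n = 3*n := by omega
  have e4 : 2*(n+1) - (n+1) = n+1 := by omega
  have e5 : 3*(n+1) - (n+1) = 2*(n+1) := by omega
  have e6 : 6*(n+1) - 3*(n+1) = 3*(n+1) := by omega
  rw [e1] at h1; rw [e2] at h2; rw [e3] at h3; rw [e4] at h4; rw [e5] at h5; rw [e6] at h6
  have g1 : ((n+1).factorial : ℚ) = (n+1) * n.factorial := by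
    push_cast [Nat.factorial_succ]; ring
  have g2 : ((2*(n+1)).factorial : ℚ) = (2*n+2)*(2*n+1) * (2*n).factorial := by
    have : 2*(n+1) = (2*n+1)+1 := by omega
    rw [this, Nat.factorial_succ, Nat.factorial_succ]; push_cast; ring
  have g3 : ((3*(n+1)).factorial : ℚ) = (3*n+3)*(3*n+2)*(3*n+1) * (3*n).factorial := by
    have : 3*(n+1) = (3*n+2)+1 := by omega
    rw [this, Nat.factorial_succ, Nat.factorial_succ, Nat.factorial_succ]; push_cast; ring
  have g4 : ((6*(n+1)).factorial : ℚ)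
      = (6*n+6)*(6*n+5)*(6*n+4)*(6*n+3)*(6*n+2)*(6*n+1) * (6*n).factorial := by
    have : 6*(n+1) = (6*n+5)+1 := by omega
    rw [this, Nat.factorial_succ, Nat.factorial_succ, Nat.factorial_succ, Nat.factorial_succ,
      Nat.factorial_succ, Nat.factorial_succ]
    push_cast; ring
  rw [h1, h2, h3, h4, h5, h6, g1, g2, g3, g4]
  field_simp
  ring

theorem stmt_5 (m : ℤ) (hm : m ≠ 0) (n : ℕ) :
    ∑ k ∈ Finset.range (n + 1),
      (((1728 - (m : ℚ)) * k ^ 3 - 864 * k ^ 2 - 48 * k + 24) *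
          ((2 * k).choose k : ℚ) * ((3 * k).choose k : ℚ) * ((6 * k).choose (3 * k) : ℚ)) /
        ((2 * (k : ℚ) - 1) * (6 * (k : ℚ) - 1) * (m : ℚ) ^ k)
      = 24 * (6 * (n : ℚ) + 1) * ((2 * n).choose n : ℚ) * ((3 * n).choose n : ℚ) *
          ((6 * n).choose (3 * n) : ℚ) / (m : ℚ) ^ n := by
  have hmq : (m : ℚ) ≠ 0 := Int.cast_ne_zero.mpr hm
  induction n with
  | zero => norm_num
  | succ n ih =>
    rw [Finset.sum_range_succ, ih]
    have hk := key_stmt_5 n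
    have hp : (m:ℚ)^n ≠ 0 := pow_ne_zero _ hmq
    have h1 : (2*(n:ℚ)+1) ≠ 0 := by positivity
    have h2 : (6*(n:ℚ)+5) ≠ 0 := by positivity
    push_cast
    have e1 : (2*((n:ℚ)+1) - 1) = 2*(n:ℚ)+1 := by ring
    have e2 : (6*((n:ℚ)+1) - 1) = 6*(n:ℚ)+5 := by ring
    rw [e1, e2]
    field_simp
    ring_nf at hk ⊢
    linear_combination (-(m:ℚ)*(m:ℚ)^n) * hk
end

section
/- For all nonzero integers m and all positive integers n, the sum over k from 1 to n of m^k * ((m-64)k^3 - 32k^2 + 16k + 8) / ((2k+1)^2 * k^3 * C(2k,k)^3) equals m^{n+1} / ((2n+1)^2 * C(2n,n)^3) - m. -/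
/-!
With `F k = m ^ (k + 1) / ((2k + 1)² C(2k, k)³)`, the recurrence
`(k + 1) C(2k + 2, k + 1) = 2 (2k + 1) C(2k, k)` shows that the `k`-th summand is `F k - F (k - 1)`,
so the sum telescopes to `F n - F 0 = F n - m`.
-/

open Finset Nat

theorem Finset.sum_Icc_one_eq_sum_range {M : Type*} [AddCommMonoid M] (g : ℕ → M) (n : ℕ) :
    ∑ k ∈ Icc 1 n, g k = ∑ i ∈ range n, g (i + 1) := by
  rw [range_eq_Ico, sum_Ico_add', ← Ico_add_one_right_eq_Icc, zero_add]

section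

variable {K : Type*} [Field K] [CharZero K]

theorem cast_centralBinom_succ (n : ℕ) :
    (centralBinom (n + 1) : K) = 2 * (2 * n + 1) * centralBinom n / (n + 1) := by
  rw [eq_div_iff n.cast_add_one_ne_zero, mul_comm]
  exact_mod_cast succ_mul_centralBinom_succ n

def antidiff (x : K) (n : ℕ) : K :=
  x ^ (n + 1) / ((2 * n + 1) ^ 2 * centralBinom n ^ 3)

theorem antidiff_succ_sub (x : K) (n : ℕ) :
    antidiff x (n + 1) - antidiff x n =
      x ^ (n + 1) * ((x - 64) * ((n + 1 : ℕ) : K) ^ 3 - 32 * ((n + 1 : ℕ) : K) ^ 2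
          + 16 * ((n + 1 : ℕ) : K) + 8) /
        ((2 * ((n + 1 : ℕ) : K) + 1) ^ 2 * ((n + 1 : ℕ) : K) ^ 3 * centralBinom (n + 1) ^ 3) := by
  have h3 : (2 * ((n : K) + 1) + 1) ≠ 0 := by exact_mod_cast (2 * (n + 1)).succ_ne_zero
  unfold antidiff
  rw [cast_centralBinom_succ]
  push_cast
  field_simp
  ring

end

theorem stmt_6_general (m : ℤ) (n : ℕ) :
    ∑ k ∈ Finset.Icc 1 n,
      ((m : ℚ) ^ k * (((m : ℚ) - 64) * k ^ 3 - 32 * k ^ 2 + 16 * k + 8)) /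
        ((2 * (k : ℚ) + 1) ^ 2 * (k : ℚ) ^ 3 * ((2 * k).choose k : ℚ) ^ 3)
      = (m : ℚ) ^ (n + 1) / ((2 * (n : ℚ) + 1) ^ 2 * ((2 * n).choose n : ℚ) ^ 3) - (m : ℚ) := by
  simp only [← centralBinom_eq_two_mul_choose]
  rw [sum_Icc_one_eq_sum_range]
  simp only [← antidiff_succ_sub]
  rw [sum_range_sub]
  simp [antidiff]

theorem stmt_6 (m : ℤ) (hm : m ≠ 0) (n : ℕ) (hn : 1 ≤ n) :
    ∑ k ∈ Finset.Icc 1 n,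
      ((m : ℚ) ^ k * (((m : ℚ) - 64) * k ^ 3 - 32 * k ^ 2 + 16 * k + 8)) /
        ((2 * (k : ℚ) + 1) ^ 2 * (k : ℚ) ^ 3 * ((2 * k).choose k : ℚ) ^ 3)
      = (m : ℚ) ^ (n + 1) / ((2 * (n : ℚ) + 1) ^ 2 * ((2 * n).choose n : ℚ) ^ 3) - (m : ℚ) :=
  stmt_6_general m n
end

section
/- For all nonzero integers m and all positive integers n, the sum over k from 1 to n of m^k * ((m-64)k^3 - 96k^2 - 48k - 8) / ((2k+1)^3 * k^3 * C(2k,k)^3) equals m^{n+1} / ((2n+1)^3 * C(2n,n)^3) - m. -/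
/-!
The sum telescopes: with `F k = m^(k+1) / ((2k+1)^3 C(2k,k)^3)`, the `k`-th summand is
`F k - F (k-1)` and `F 0 = m`. Indeed `(2k-1) C(2k-2,k-1) = k C(2k,k) / 2`, so the common
denominator of `F k - F (k-1)` is `(2k+1)^3 k^3 C(2k,k)^3`, and the numerator is
`m^k (m k^3 - 8 (2k+1)^3)`, which expands to the given cubic.
-/
open Finset Nat

lemma sum_Icc_one_eq_sub_of_succ {M : Type*} [AddCommGroup M] (f g : ℕ → M)
    (h : ∀ k, g (k + 1) = f (k + 1) - f k) (n : ℕ) :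
    ∑ k ∈ Icc 1 n, g k = f n - f 0 := by
  rw [← Finset.Ico_add_one_right_eq_Icc, sum_Ico_eq_sum_range, Nat.add_sub_cancel]
  simp only [add_comm 1, h]
  exact sum_range_sub f n

section
variable {K : Type*} [Field K] [CharZero K]

lemma succ_mul_centralBinom_succ_cast (n : ℕ) :
    ((n : K) + 1) * centralBinom (n + 1) = 2 * (2 * n + 1) * centralBinom n := by
  exact_mod_cast succ_mul_centralBinom_succ n

def telescopingTerm (x : K) (k : ℕ) : K :=
  x ^ (k + 1) / ((2 * k + 1) ^ 3 * centralBinom k ^ 3)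

lemma telescopingTerm_zero (x : K) : telescopingTerm x 0 = x := by
  simp [telescopingTerm]

lemma telescopingTerm_succ_sub (x : K) (k : ℕ) :
    telescopingTerm x (k + 1) - telescopingTerm x k =
      x ^ (k + 1) * ((x - 64) * (k + 1 : ℕ) ^ 3 - 96 * (k + 1 : ℕ) ^ 2 - 48 * (k + 1 : ℕ) - 8) /
        ((2 * ((k + 1 : ℕ) : K) + 1) ^ 3 * ((k + 1 : ℕ) : K) ^ 3 * centralBinom (k + 1) ^ 3) := by
  have hsucc : (k : K) + 1 ≠ 0 := Nat.cast_add_one_ne_zero k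
  have hodd : 2 * (k : K) + 1 ≠ 0 := by exact_mod_cast (2 * k).succ_ne_zero
  have hodd_succ : 2 * ((k : K) + 1) + 1 ≠ 0 := by exact_mod_cast (2 * (k + 1)).succ_ne_zero
  have hbinom : (centralBinom (k + 1) : K) ≠ 0 := by
    exact_mod_cast (centralBinom_pos (k + 1)).ne'
  have hrec : (centralBinom k : K) = ((k : K) + 1) * centralBinom (k + 1) / (2 * (2 * k + 1)) := by
    rw [succ_mul_centralBinom_succ_cast]; field_simp
  rw [telescopingTerm, telescopingTerm, hrec]
  push_cast
  field_simp
  ring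
end

theorem stmt_7_general (m : ℤ) (n : ℕ) :
    ∑ k ∈ Finset.Icc 1 n,
      ((m : ℚ) ^ k * (((m : ℚ) - 64) * k ^ 3 - 96 * k ^ 2 - 48 * k - 8)) /
        ((2 * (k : ℚ) + 1) ^ 3 * (k : ℚ) ^ 3 * ((2 * k).choose k : ℚ) ^ 3)
      = (m : ℚ) ^ (n + 1) / ((2 * (n : ℚ) + 1) ^ 3 * ((2 * n).choose n : ℚ) ^ 3) - (m : ℚ) := by
  rw [sum_Icc_one_eq_sub_of_succ (telescopingTerm (m : ℚ)) _ (fun k => ?_) n,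
    telescopingTerm_zero, telescopingTerm, centralBinom_eq_two_mul_choose]
  rw [telescopingTerm_succ_sub, centralBinom_eq_two_mul_choose]

theorem stmt_7 (m : ℤ) (hm : m ≠ 0) (n : ℕ) (hn : 1 ≤ n) :
    ∑ k ∈ Finset.Icc 1 n,
      ((m : ℚ) ^ k * (((m : ℚ) - 64) * k ^ 3 - 96 * k ^ 2 - 48 * k - 8)) /
        ((2 * (k : ℚ) + 1) ^ 3 * (k : ℚ) ^ 3 * ((2 * k).choose k : ℚ) ^ 3)
      = (m : ℚ) ^ (n + 1) / ((2 * (n : ℚ) + 1) ^ 3 * ((2 * n).choose n : ℚ) ^ 3) - (m : ℚ) :=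
  stmt_7_general m n
end

section
/- For all nonzero integers m and all positive integers n, the sum over k from 1 to n of m^k * ((m-108)k^3 - 54k^2 + 12k + 6) / ((2k+1)(3k+1) * k^3 * C(2k,k)^2 * C(3k,k)) equals m^{n+1} / ((2n+1)(3n+1) * C(2n,n)^2 * C(3n,n)) - m. -/
/-!
Let `T n = m ^ (n + 1) / ((2n+1)(3n+1) C(2n,n)² C(3n,n))`, so `T 0 = m`. The ratio
`T k / T (k-1) = m k³ / (6 (2k+1)(3k+1)(3k-1))` is rational in `k`, and the `k`-th summand is
exactly `T k - T (k-1)`, so the sum telescopes to `T n - m`.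
-/

open Finset

theorem Nat.succ_mul_choose_three_mul_succ (n : ℕ) :
    (n + 1) * (2 * n + 2) * (2 * n + 1) * (3 * (n + 1)).choose (n + 1) =
      (3 * n + 3) * (3 * n + 2) * (3 * n + 1) * (3 * n).choose n := by
  have h1 := Nat.add_one_mul_choose_eq (3 * n) n
  have h2 : (3 * n + 1).choose (n + 1) * (3 * n + 2) =
      (3 * n + 2).choose (n + 1) * (2 * n + 1) := by
    rw [Nat.choose_mul_succ_eq, show 3 * n + 1 + 1 - (n + 1) = 2 * n + 1 by omega]
  have h3 : (3 * n + 2).choose (n + 1) * (3 * n + 3) =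
      (3 * (n + 1)).choose (n + 1) * (2 * n + 2) := by
    rw [Nat.choose_mul_succ_eq, show 3 * n + 2 + 1 - (n + 1) = 2 * n + 2 by omega]; rfl
  linear_combination (n + 1) * (2 * n + 1) * h3.symm + (3 * n + 3) * (n + 1) * h2.symm +
    (3 * n + 3) * (3 * n + 2) * h1.symm

theorem Finset.sum_Icc_one_sub_pred {G : Type*} [AddCommGroup G] (f : ℕ → G) (n : ℕ) :
    ∑ k ∈ Icc 1 n, (f k - f (k - 1)) = f n - f 0 := by
  induction n with
  | zero => simp
  | succ n ih => rw [sum_Icc_succ_top (by omega), ih]; simp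

section

variable {K : Type*} [Field K] [CharZero K]

def binomTerm (x : K) (n : ℕ) : K :=
  x ^ (n + 1) / ((2 * (n : K) + 1) * (3 * (n : K) + 1) * ((2 * n).choose n : K) ^ 2 *
    ((3 * n).choose n : K))

theorem binomTerm_zero (x : K) : binomTerm x 0 = x := by
  simp [binomTerm]

theorem binomTerm_sub_binomTerm_pred (x : K) {k : ℕ} (hk : 1 ≤ k) :
    binomTerm x k - binomTerm x (k - 1) =
      x ^ k * ((x - 108) * k ^ 3 - 54 * k ^ 2 + 12 * k + 6) /
        ((2 * (k : K) + 1) * (3 * (k : K) + 1) * (k : K) ^ 3 *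
          ((2 * k).choose k : K) ^ 2 * ((3 * k).choose k : K)) := by
  obtain ⟨n, rfl⟩ := Nat.exists_eq_add_of_le' hk
  have hA : ((2 * (n + 1)).choose (n + 1) : K) =
      2 * (2 * n + 1) * ((2 * n).choose n : K) / (n + 1) := by
    rw [eq_div_iff (Nat.cast_add_one_ne_zero n), mul_comm, ← Nat.centralBinom_eq_two_mul_choose,
      ← Nat.centralBinom_eq_two_mul_choose]
    exact_mod_cast Nat.succ_mul_centralBinom_succ n
  have hB : ((3 * (n + 1)).choose (n + 1) : K) =
      (3 * n + 3) * (3 * n + 2) * (3 * n + 1) * ((3 * n).choose n : K) /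
        ((n + 1) * (2 * n + 2) * (2 * n + 1)) := by
    rw [eq_div_iff (by norm_cast), mul_comm]
    exact_mod_cast Nat.succ_mul_choose_three_mul_succ n
  -- the linear factors that `field_simp` cannot see to be nonzero in a field without an order
  have h3 : (n : K) * 3 + 2 ≠ 0 := by norm_cast
  have h4 : ((n : K) + 1) * 3 + 1 ≠ 0 := by norm_cast
  have h5 : 2 * ((n : K) + 1) + 1 ≠ 0 := by norm_cast
  simp only [binomTerm, Nat.add_sub_cancel]
  push_cast
  rw [hA, hB]
  field_simp
  ring

end

theorem stmt_8_general (m : ℤ) (n : ℕ) :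
    ∑ k ∈ Finset.Icc 1 n,
      ((m : ℚ) ^ k * (((m : ℚ) - 108) * k ^ 3 - 54 * k ^ 2 + 12 * k + 6)) /
        ((2 * (k : ℚ) + 1) * (3 * (k : ℚ) + 1) * (k : ℚ) ^ 3 *
          ((2 * k).choose k : ℚ) ^ 2 * ((3 * k).choose k : ℚ))
      = (m : ℚ) ^ (n + 1) /
          ((2 * (n : ℚ) + 1) * (3 * (n : ℚ) + 1) * ((2 * n).choose n : ℚ) ^ 2 *
            ((3 * n).choose n : ℚ)) - (m : ℚ) :=
  calc _ = ∑ k ∈ Icc 1 n, (binomTerm (m : ℚ) k - binomTerm (m : ℚ) (k - 1)) :=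
        sum_congr rfl fun k hk => (binomTerm_sub_binomTerm_pred _ (mem_Icc.1 hk).1).symm
    _ = _ := by rw [sum_Icc_one_sub_pred, binomTerm_zero]; rfl

theorem stmt_8 (m : ℤ) (hm : m ≠ 0) (n : ℕ) (hn : 1 ≤ n) :
    ∑ k ∈ Finset.Icc 1 n,
      ((m : ℚ) ^ k * (((m : ℚ) - 108) * k ^ 3 - 54 * k ^ 2 + 12 * k + 6)) /
        ((2 * (k : ℚ) + 1) * (3 * (k : ℚ) + 1) * (k : ℚ) ^ 3 *
          ((2 * k).choose k : ℚ) ^ 2 * ((3 * k).choose k : ℚ))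
      = (m : ℚ) ^ (n + 1) /
          ((2 * (n : ℚ) + 1) * (3 * (n : ℚ) + 1) * ((2 * n).choose n : ℚ) ^ 2 *
            ((3 * n).choose n : ℚ)) - (m : ℚ) :=
  stmt_8_general m n
end

section
/- For integers b, c and every positive integer n, the generalized central trinomial coefficients satisfy the recurrence (n+1) * T_{n+1}(b,c) = (2n+1) * b * T_n(b,c) - n * (b^2 - 4c) * T_{n-1}(b,c). -/
/-!
The recurrence is proved by a creative-telescoping certificate. Writing
`t(n,k) = C(n,2k) C(2k,k) b^(n-2k) c^k`, one has for `n ≥ 1` the termwise identity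
`(n+1) t(n+1,k+1) - (2n+1) b t(n,k+1) + n b² t(n-1,k+1) = 4nc t(n-1,k)`,
which reduces to Pascal's rule, absorption and `(k+1) C(2k+2,k+1) = 2(2k+1) C(2k,k)`.
Summing over `k`, the `k = 0` terms `(n+1) b^(n+1) - (2n+1) b^(n+1) + n b^(n+1)` cancel.
-/

/-- The generalized central trinomial coefficient `T_n(b,c)`, the coefficient of `x^n`
in `(x^2 + b x + c)^n`. -/
def genTrinomial (b c : ℤ) (n : ℕ) : ℤ :=
  ∑ k ∈ Finset.range (n / 2 + 1),
    (n.choose (2 * k) : ℤ) * ((2 * k).choose k : ℤ) * b ^ (n - 2 * k) * c ^ k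

theorem choose_weighted_second_difference (p r : ℕ) :
    ((r : ℤ) + 1) * (((p : ℤ) + 2) * (p + 2).choose (r + 2)
      - (2 * p + 3) * (p + 1).choose (r + 2) + (p + 1) * p.choose (r + 2))
      = (r + 2) * (p + 1) * p.choose r := by
  have absorb : ((p : ℤ) + 1) * p.choose r = (p + 1).choose (r + 1) * (r + 1) := by
    exact_mod_cast Nat.add_one_mul_choose_eq p r
  have pascal₀ : ((p + 1).choose (r + 1) : ℤ) = p.choose r + p.choose (r + 1) := by
    exact_mod_cast Nat.choose_succ_succ' p r
  have pascal₁ : ((p + 1).choose (r + 2) : ℤ) = p.choose (r + 1) + p.choose (r + 2) := by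
    exact_mod_cast Nat.choose_succ_succ' p (r + 1)
  have pascal₂ :
      ((p + 2).choose (r + 2) : ℤ) = (p + 1).choose (r + 1) + (p + 1).choose (r + 2) := by
    exact_mod_cast Nat.choose_succ_succ' (p + 1) (r + 1)
  linear_combination (r + 1) * (p + 2) * pascal₂ - (r + 1) * (p + 1) * pascal₁
    + (r + 1) * (p + 1) * pascal₀ - absorb

namespace genTrinomial

def coeff (n k : ℕ) : ℤ := (n.choose (2 * k) : ℤ) * ((2 * k).choose k : ℤ)

def term (b c : ℤ) (n k : ℕ) : ℤ := coeff n k * b ^ (n - 2 * k) * c ^ k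

theorem coeff_recurrence (p k : ℕ) :
    ((p : ℤ) + 2) * coeff (p + 2) (k + 1) - (2 * p + 3) * coeff (p + 1) (k + 1)
      + (p + 1) * coeff p (k + 1) = 4 * (p + 1) * coeff p k := by
  have central :
      ((k : ℤ) + 1) * (2 * k + 2).choose (k + 1) = 2 * (2 * k + 1) * (2 * k).choose k := by
    have := Nat.succ_mul_centralBinom_succ k
    simp only [Nat.centralBinom_eq_two_mul_choose] at this
    exact_mod_cast this
  have second := choose_weighted_second_difference p (2 * k)
  apply mul_left_cancel₀ (show 2 * (k : ℤ) + 1 ≠ 0 by positivity)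
  simp only [coeff, mul_add, Nat.mul_one]
  push_cast at second ⊢
  linear_combination ((2 * k + 2).choose (k + 1) : ℤ) * second
    + 2 * (p + 1) * (p.choose (2 * k) : ℤ) * central

theorem term_zero (b c : ℤ) (n : ℕ) : term b c n 0 = b ^ n := by
  simp [term, coeff]

/-- Also for `n < 2 * k`, where the truncated exponent `n - 2 * k` is junk but `coeff n k = 0`. -/
theorem pow_mul_term (b c : ℤ) (n k j : ℕ) :
    b ^ j * term b c n k = coeff n k * b ^ (n + j - 2 * k) * c ^ k := by
  rcases le_or_gt (2 * k) n with h | h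
  · rw [term, show n + j - 2 * k = n - 2 * k + j by omega, pow_add]
    ring
  · simp [term, coeff, Nat.choose_eq_zero_of_lt h]

theorem term_recurrence (b c : ℤ) (p k : ℕ) :
    ((p : ℤ) + 2) * term b c (p + 2) (k + 1) - (2 * p + 3) * b * term b c (p + 1) (k + 1)
      + (p + 1) * b ^ 2 * term b c p (k + 1) = 4 * (p + 1) * c * term b c p k := by
  have shifted : ∀ j m, m + j = p + 2 →
      b ^ j * term b c m (k + 1) = coeff m (k + 1) * b ^ (p - 2 * k) * c ^ (k + 1) := by
    intro j m h
    rw [pow_mul_term, show m + j - 2 * (k + 1) = p - 2 * k by omega]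
  have unshifted : term b c p k = coeff p k * b ^ (p - 2 * k) * c ^ k := rfl
  linear_combination (p + 2) * shifted 0 (p + 2) rfl - (2 * p + 3) * shifted 1 (p + 1) rfl
    + (p + 1) * shifted 2 p rfl - 4 * (p + 1) * c * unshifted
    + b ^ (p - 2 * k) * c ^ (k + 1) * coeff_recurrence p k

theorem eq_sum_range (b c : ℤ) {n N : ℕ} (h : n / 2 + 1 ≤ N) :
    genTrinomial b c n = ∑ k ∈ Finset.range N, term b c n k := by
  refine Finset.sum_subset (Finset.range_subset_range.2 h) fun k _ hk => ?_
  simp only [Finset.mem_range, not_lt] at hk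
  simp [Nat.choose_eq_zero_of_lt (show n < 2 * k by omega)]

end genTrinomial

theorem stmt_10_general (b c : ℤ) (n : ℕ) :
    ((n : ℤ) + 1) * genTrinomial b c (n + 1) =
      (2 * (n : ℤ) + 1) * b * genTrinomial b c n -
        (n : ℤ) * (b ^ 2 - 4 * c) * genTrinomial b c (n - 1) := by
  rcases n with _ | p
  · simp [genTrinomial]
  have summed : ∑ k ∈ Finset.range (p + 3), (((p : ℤ) + 2) * genTrinomial.term b c (p + 2) k
      - (2 * p + 3) * b * genTrinomial.term b c (p + 1) k
      + (p + 1) * b ^ 2 * genTrinomial.term b c p k)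
      = 4 * (p + 1) * c * ∑ k ∈ Finset.range (p + 2), genTrinomial.term b c p k := by
    rw [Finset.sum_range_succ', Finset.mul_sum]
    simp only [genTrinomial.term_recurrence, genTrinomial.term_zero]
    ring
  simp only [Finset.sum_add_distrib, Finset.sum_sub_distrib, ← Finset.mul_sum] at summed
  rw [← genTrinomial.eq_sum_range b c (n := p + 2) (by omega),
    ← genTrinomial.eq_sum_range b c (n := p + 1) (by omega),
    ← genTrinomial.eq_sum_range b c (n := p) (N := p + 3) (by omega),
    ← genTrinomial.eq_sum_range b c (n := p) (N := p + 2) (by omega)] at summed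
  push_cast
  linear_combination summed

theorem stmt_10 (b c : ℤ) (n : ℕ) (hn : 1 ≤ n) :
    ((n : ℤ) + 1) * genTrinomial b c (n + 1) =
      (2 * (n : ℤ) + 1) * b * genTrinomial b c n -
        (n : ℤ) * (b ^ 2 - 4 * c) * genTrinomial b c (n - 1) :=
  stmt_10_general b c n
end

section
/- For all integers c and all nonnegative integers n, S_n(4,c) = sum over k from 0 to floor(n/2) of C(n-k,k) * C(2(n-k), n-k) * c^k * 4^{n-2k} * s_{n,k}, where s_{n,k} = (1/C(n,k)) * sum over i from 0 to k of C(n,2i) * C(n,2(k-i)) * C(2i,i) * C(2(k-i), k-i). -/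
/-- `S_n(b,c) = ∑_{k=0}^n C(n,k)^2 T_k(b,c) T_{n-k}(b,c)`. -/
def sunS (b c : ℤ) (n : ℕ) : ℤ :=
  ∑ k ∈ Finset.range (n + 1),
    (n.choose k : ℤ) ^ 2 * genTrinomial b c k * genTrinomial b c (n - k)

/-- The rational numbers `s_{n,k}` for `n ≥ k ≥ 0`. -/
def sSeq (n k : ℕ) : ℚ :=
  (1 / (n.choose k : ℚ)) *
    ∑ i ∈ Finset.range (k + 1),
      (n.choose (2 * i) : ℚ) * (n.choose (2 * (k - i)) : ℚ) *
        ((2 * i).choose i : ℚ) * ((2 * (k - i)).choose (k - i) : ℚ)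

open Finset

lemma aux1 {n k : ℕ} (a : ℕ) (hk : k ≤ n) :
    n.choose k * k.choose a = n.choose a * (n - a).choose (n - k) := by
  rcases le_or_gt a k with h | h
  · rw [Nat.choose_mul h]
    congr 1
    rw [show n - k = (n - a) - (k - a) by omega, Nat.choose_symm (by omega)]
  · rw [Nat.choose_eq_zero_of_lt h, Nat.mul_zero]
    rcases le_or_gt a n with h2 | h2
    · rw [Nat.choose_eq_zero_of_lt (show n - a < n - k by omega), Nat.mul_zero]
    · rw [Nat.choose_eq_zero_of_lt h2, Nat.zero_mul]

lemma aux2_s14 {n k : ℕ} (b : ℕ) (hk : k ≤ n) :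
    n.choose k * (n - k).choose b = n.choose b * (n - b).choose k := by
  rcases le_or_gt (k + b) n with h | h
  · have h1 : n.choose (k + b) * (k + b).choose k = n.choose k * (n - k).choose b := by
      rw [Nat.choose_mul (Nat.le_add_right k b)]
      congr 2 <;> omega
    have h2 : n.choose (k + b) * (k + b).choose b = n.choose b * (n - b).choose k := by
      rw [Nat.choose_mul (Nat.le_add_left b k)]
      congr 2 <;> omega
    rw [← h1, ← h2, Nat.choose_symm_add]
  · rw [Nat.choose_eq_zero_of_lt (show n - k < b by omega), Nat.mul_zero]
    rcases le_or_gt b n with h2 | h2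
    · rw [Nat.choose_eq_zero_of_lt (show n - b < k by omega), Nat.mul_zero]
    · rw [Nat.choose_eq_zero_of_lt h2, Nat.zero_mul]

lemma lemA (n a b : ℕ) :
    ∑ k ∈ range (n + 1), n.choose k * k.choose a * (n.choose k * (n - k).choose b)
      = n.choose a * n.choose b * ((n - b) + (n - a)).choose n := by
  have h : ∀ k ∈ range (n + 1),
      n.choose k * k.choose a * (n.choose k * (n - k).choose b)
        = n.choose a * n.choose b * ((n - b).choose k * (n - a).choose (n - k)) := by
    intro k hk
    rw [mem_range] at hk
    rw [aux1 a (by omega), aux2_s14 b (by omega)]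
    ring
  rw [Finset.sum_congr rfl h, ← Finset.mul_sum]
  congr 1
  rw [Nat.add_choose_eq, Finset.Nat.sum_antidiagonal_eq_sum_range_succ_mk]

lemma lemB {n m : ℕ} (h : 2 * m ≤ n) :
    (n - m).choose m * (2 * (n - m)).choose (n - m)
      = n.choose m * (2 * (n - m)).choose n := by
  have h1 : (2 * (n - m)).choose (n - m) * (n - m).choose m
      = (2 * (n - m)).choose m * (2 * (n - m) - m).choose (n - m - m) :=
    Nat.choose_mul (by omega)
  have h2 : (2 * (n - m)).choose n * n.choose m
      = (2 * (n - m)).choose m * (2 * (n - m) - m).choose (n - m) :=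
    Nat.choose_mul (by omega)
  have h3 : (2 * (n - m) - m).choose (n - m - m) = (2 * (n - m) - m).choose (n - m) := by
    rw [show n - m - m = (2 * (n - m) - m) - (n - m) by omega, Nat.choose_symm (by omega)]
  rw [mul_comm ((n-m).choose m), mul_comm (n.choose m), h1, h3, ← h2, mul_comm]

/-- The common term of both sides. -/
def fAux (c : ℤ) (n i j : ℕ) : ℚ :=
  (n.choose (2*i) : ℚ) * ((2*i).choose i : ℚ) * (n.choose (2*j) : ℚ) * ((2*j).choose j : ℚ)
    * (((n - 2*j) + (n - 2*i)).choose n : ℚ) * 4 ^ (n - 2*(i+j)) * (c : ℚ) ^ (i+j)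

lemma trinQ (c : ℤ) {n m : ℕ} (h : m ≤ n) :
    ((genTrinomial 4 c m : ℤ) : ℚ) =
      ∑ i ∈ range (n + 1),
        (m.choose (2*i) : ℚ) * ((2*i).choose i : ℚ) * 4 ^ (m - 2*i) * (c : ℚ) ^ i := by
  rw [genTrinomial]
  push_cast
  apply Finset.sum_subset
  · apply Finset.range_subset_range.2
    omega
  · intro i _ hi
    rw [mem_range] at hi
    rw [Nat.choose_eq_zero_of_lt (show m < 2*i by omega)]
    push_cast
    ring

lemma lhs_expand (c : ℤ) (n : ℕ) :
    (sunS 4 c n : ℚ) = ∑ i ∈ range (n + 1), ∑ j ∈ range (n + 1), fAux c n i j := by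
  rw [sunS]
  push_cast
  calc
    ∑ k ∈ range (n + 1),
        (n.choose k : ℚ)^2 * (genTrinomial 4 c k : ℚ) * (genTrinomial 4 c (n-k) : ℚ)
      = ∑ k ∈ range (n + 1), ∑ i ∈ range (n + 1), ∑ j ∈ range (n + 1),
          ((n.choose k * k.choose (2*i) * (n.choose k * (n-k).choose (2*j)) : ℕ) : ℚ)
            * (((2*i).choose i : ℚ) * ((2*j).choose j : ℚ)
              * 4 ^ (n - 2*(i+j)) * (c : ℚ) ^ (i+j)) := by
        apply Finset.sum_congr rfl
        intro k hk
        rw [mem_range] at hk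
        rw [trinQ c (show k ≤ n by omega), trinQ c (show n - k ≤ n by omega),
          mul_assoc, Finset.sum_mul_sum]
        simp only [Finset.mul_sum]
        apply Finset.sum_congr rfl; intro i _
        apply Finset.sum_congr rfl; intro j _
        by_cases hij : 2*i ≤ k ∧ 2*j ≤ n - k
        · have e : (4:ℚ) ^ (k - 2*i) * 4 ^ (n - k - 2*j) = 4 ^ (n - 2*(i+j)) := by
            rw [← pow_add]; congr 1; omega
          have e2 : (c:ℚ) ^ i * (c:ℚ) ^ j = (c:ℚ) ^ (i+j) := (pow_add _ i j).symm
          push_cast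
          rw [← e, ← e2]
          ring
        · rcases not_and_or.mp hij with h | h
          · rw [Nat.choose_eq_zero_of_lt (show k < 2*i by omega)]
            push_cast; ring
          · rw [Nat.choose_eq_zero_of_lt (show n - k < 2*j by omega)]
            push_cast; ring
    _ = ∑ i ∈ range (n + 1), ∑ j ∈ range (n + 1), ∑ k ∈ range (n + 1),
          ((n.choose k * k.choose (2*i) * (n.choose k * (n-k).choose (2*j)) : ℕ) : ℚ)
            * (((2*i).choose i : ℚ) * ((2*j).choose j : ℚ)
              * 4 ^ (n - 2*(i+j)) * (c : ℚ) ^ (i+j)) := by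
        rw [Finset.sum_comm]
        apply Finset.sum_congr rfl
        intro i _
        rw [Finset.sum_comm]
    _ = ∑ i ∈ range (n + 1), ∑ j ∈ range (n + 1), fAux c n i j := by
        apply Finset.sum_congr rfl; intro i _
        apply Finset.sum_congr rfl; intro j _
        rw [← Finset.sum_mul, ← Nat.cast_sum, lemA n (2*i) (2*j), fAux]
        push_cast
        ring

lemma vanish (c : ℤ) {n i j : ℕ} (hi : i ≤ n) (hj : j ≤ n) (h : ¬ 2*(i+j) ≤ n) :
    fAux c n i j = 0 := by
  rw [fAux]
  rcases le_or_gt (2*i) n with h1 | h1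
  · rcases le_or_gt (2*j) n with h2 | h2
    · rw [Nat.choose_eq_zero_of_lt (show (n - 2*j) + (n - 2*i) < n by omega)]
      push_cast; ring
    · rw [Nat.choose_eq_zero_of_lt h2]; push_cast; ring
  · rw [Nat.choose_eq_zero_of_lt h1]; push_cast; ring

lemma rhs_expand (c : ℤ) (n : ℕ) :
    (∑ k ∈ Finset.range (n / 2 + 1),
        ((n - k).choose k : ℚ) * ((2 * (n - k)).choose (n - k) : ℚ) * (c : ℚ) ^ k *
          4 ^ (n - 2 * k) * sSeq n k)
      = ∑ m ∈ range (n / 2 + 1), ∑ i ∈ range (m + 1), fAux c n i (m - i) := by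
  apply Finset.sum_congr rfl
  intro m hm
  rw [mem_range] at hm
  have h2m : 2 * m ≤ n := by omega
  have hC : (n.choose m : ℚ) ≠ 0 :=
    Nat.cast_ne_zero.2 (Nat.choose_pos (by omega)).ne'
  have key : ((n - m).choose m : ℚ) * ((2 * (n - m)).choose (n - m) : ℚ)
      = (n.choose m : ℚ) * ((2 * (n - m)).choose n : ℚ) := by
    exact_mod_cast congrArg (Nat.cast : ℕ → ℚ) (lemB h2m)
  rw [sSeq]
  simp only [Finset.mul_sum]
  apply Finset.sum_congr rfl
  intro i hi
  rw [mem_range] at hi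
  rw [fAux]
  rw [show i + (m - i) = m by omega, show (n - 2*(m - i)) + (n - 2*i) = 2*(n - m) by omega]
  field_simp
  linear_combination ((n.choose (2*i) : ℚ) * (n.choose (2*(m-i)) : ℚ) * ((2*i).choose i : ℚ)
    * ((2*(m-i)).choose (m-i) : ℚ) * (c : ℚ)^m) * key

lemma bridge (c : ℤ) (n : ℕ) :
    ∑ i ∈ range (n + 1), ∑ j ∈ range (n + 1), fAux c n i j
      = ∑ m ∈ range (n / 2 + 1), ∑ i ∈ range (m + 1), fAux c n i (m - i) := by
  rw [← Finset.sum_product', Finset.sum_sigma']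
  rw [← Finset.sum_subset
      (Finset.filter_subset (fun p : ℕ × ℕ => 2*(p.1 + p.2) ≤ n) (range (n+1) ×ˢ range (n+1)))
      (by
        intro p hp hnp
        simp only [mem_filter, mem_product, mem_range] at hp hnp
        exact vanish c (by omega) (by omega) (fun h => hnp ⟨hp, h⟩))]
  apply Finset.sum_nbij' (fun p : ℕ × ℕ => (⟨p.1 + p.2, p.1⟩ : Σ _ : ℕ, ℕ))
    (fun q : Σ _ : ℕ, ℕ => (q.2, q.1 - q.2))
  · intro p hp
    simp only [mem_filter, mem_product, mem_range] at hp
    simp only [mem_sigma, mem_range]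
    omega
  · intro q hq
    simp only [mem_sigma, mem_range] at hq
    simp only [mem_filter, mem_product, mem_range]
    omega
  · intro p hp
    simp
  · intro q hq
    simp only [mem_sigma, mem_range] at hq
    obtain ⟨m, i⟩ := q
    simp only [Sigma.mk.inj_iff, heq_eq_eq] at *
    exact ⟨by omega, trivial⟩
  · intro p hp
    simp

theorem stmt_14 (c : ℤ) (n : ℕ) :
    (sunS 4 c n : ℚ) =
      ∑ k ∈ Finset.range (n / 2 + 1),
        ((n - k).choose k : ℚ) * ((2 * (n - k)).choose (n - k) : ℚ) * (c : ℚ) ^ k *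
          4 ^ (n - 2 * k) * sSeq n k := by
  rw [lhs_expand, rhs_expand, bridge]
end

section
/- For all nonnegative integers k and positive integers l, the quantity s_{k+l,k} satisfies s_{k+l,k} <= (2k+1) * 4^k * l * C(k+l, l), where s_{n,k} = (1/C(n,k)) * sum over i from 0 to k of C(n,2i) * C(n,2(k-i)) * C(2i,i) * C(2(k-i), k-i). -/
namespace Nat

theorem choose_mul_choose_succ_le (n : ℕ) {a c : ℕ} (h : a ≤ c) :
    n.choose a * n.choose (c + 1) ≤ n.choose (a + 1) * n.choose c := by
  rcases le_or_gt n c with hnc | hcn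
  · simp [choose_eq_zero_of_lt (show n < c + 1 by omega)]
  have hratio : (a + 1) * (n - c) ≤ (c + 1) * (n - a) := Nat.mul_le_mul (by omega) (by omega)
  refine Nat.le_of_mul_le_mul_right (c := (a + 1) * (c + 1)) ?_ (by positivity)
  calc n.choose a * n.choose (c + 1) * ((a + 1) * (c + 1))
      = n.choose a * (n.choose (c + 1) * (c + 1)) * (a + 1) := by ring
    _ = n.choose a * n.choose c * ((a + 1) * (n - c)) := by rw [choose_succ_right_eq]; ring
    _ ≤ n.choose a * n.choose c * ((c + 1) * (n - a)) := Nat.mul_le_mul_left _ hratio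
    _ = n.choose (a + 1) * (a + 1) * n.choose c * (c + 1) := by
        rw [choose_succ_right_eq n a]; ring
    _ = n.choose (a + 1) * n.choose c * ((a + 1) * (c + 1)) := by ring

theorem choose_sub_mul_choose_add_le (n : ℕ) {k j : ℕ} (hj : j ≤ k) :
    n.choose (k - j) * n.choose (k + j) ≤ n.choose k ^ 2 := by
  induction j with
  | zero => simp [sq]
  | succ j ih =>
    calc n.choose (k - (j + 1)) * n.choose (k + j + 1)
        ≤ n.choose (k - (j + 1) + 1) * n.choose (k + j) :=
          choose_mul_choose_succ_le n (by omega)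
      _ = n.choose (k - j) * n.choose (k + j) := by rw [show k - (j + 1) + 1 = k - j by omega]
      _ ≤ n.choose k ^ 2 := ih (by omega)

theorem choose_mul_choose_le_sq (n : ℕ) {a b k : ℕ} (h : a + b = 2 * k) :
    n.choose a * n.choose b ≤ n.choose k ^ 2 := by
  wlog hab : a ≤ b generalizing a b
  · rw [mul_comm]; exact this (by omega) (by omega)
  have := choose_sub_mul_choose_add_le n (show k - a ≤ k by omega)
  rwa [show k - (k - a) = a by omega, show k + (k - a) = b by omega] at this

end Nat

theorem sSeq_summand_le (n : ℕ) {k i : ℕ} (hi : i ≤ k) :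
    n.choose (2 * i) * n.choose (2 * (k - i)) * (2 * i).choose i *
      (2 * (k - i)).choose (k - i) ≤ n.choose k ^ 2 * 4 ^ k := by
  have hcentral : (2 * i).choose i * (2 * (k - i)).choose (k - i) ≤ 4 ^ k := by
    rw [← Nat.centralBinom_eq_two_mul_choose, ← Nat.centralBinom_eq_two_mul_choose,
      show 4 ^ k = 4 ^ i * 4 ^ (k - i) by rw [← pow_add, Nat.add_sub_cancel' hi]]
    exact Nat.mul_le_mul (Nat.centralBinom_le_four_pow i) (Nat.centralBinom_le_four_pow _)
  rw [mul_assoc]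
  exact Nat.mul_le_mul (Nat.choose_mul_choose_le_sq n (by omega)) hcentral

theorem sSeq_le (n : ℕ) {k : ℕ} (hk : k ≤ n) :
    sSeq n k ≤ (k + 1) * 4 ^ k * n.choose k := by
  have hC : (0 : ℚ) < n.choose k := by exact_mod_cast Nat.choose_pos hk
  have hsum : (∑ i ∈ Finset.range (k + 1),
      (n.choose (2 * i) : ℚ) * (n.choose (2 * (k - i)) : ℚ) *
        ((2 * i).choose i : ℚ) * ((2 * (k - i)).choose (k - i) : ℚ))
      ≤ ∑ _i ∈ Finset.range (k + 1), (n.choose k ^ 2 * 4 ^ k : ℚ) := by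
    refine Finset.sum_le_sum fun i hi => ?_
    exact_mod_cast sSeq_summand_le n (Finset.mem_range_succ_iff.mp hi)
  rw [sSeq, one_div, inv_mul_le_iff₀ hC]
  refine hsum.trans (le_of_eq ?_)
  rw [Finset.sum_const, Finset.card_range, nsmul_eq_mul]
  push_cast
  ring

theorem stmt_15 (k l : ℕ) (hl : 1 ≤ l) :
    sSeq (k + l) k ≤ (2 * (k : ℚ) + 1) * 4 ^ k * l * ((k + l).choose l : ℚ) := by
  rw [← Nat.choose_symm_add]
  have hl' : (1 : ℚ) ≤ l := by exact_mod_cast hl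
  have hfactor : (k + 1 : ℚ) ≤ (2 * k + 1) * l := by nlinarith
  calc sSeq (k + l) k ≤ (k + 1) * 4 ^ k * (k + l).choose k := sSeq_le _ (by omega)
    _ ≤ (2 * k + 1) * l * 4 ^ k * (k + l).choose k := by gcongr
    _ = (2 * k + 1) * 4 ^ k * l * (k + l).choose k := by ring
end

section
/- For every odd prime p and every k in {0, 1, ..., p-1}, the Zagier number Z_k = sum over j from 0 to k of C(k,j) * C(2j,j) * C(2(k-j), k-j) satisfies Z_k ≡ legendreSym p (-1) * 32^k * Z_{p-1-k} (mod p). -/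
/-!
Zagier's numbers satisfy the Apéry-like recurrence
`(n+2)² Z_{n+2} = 4(3n²+9n+7) Z_{n+1} - 32(n+1)² Z_n`, proved by creative telescoping.
Modulo `p` the substitution `n ↦ p-3-n ≡ -n-3` maps this recurrence to itself (it swaps
`(n+1)²` and `(n+2)²` and fixes `3n²+9n+7`), so `W_k = ε 32^k Z_{p-1-k}`, with `ε = (-1)^((p-1)/2)`,
satisfies it as well wherever the leading coefficient `(k+2)²` is invertible, i.e. for `k+2 < p`.
The two sequences agree at `k = 0`, because `C(2j,j) ≡ 0` for `p/2 < j < p` leaves only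
`C(p-1,(p-1)/2)³ ≡ ε` in `Z_{p-1}`, and at `k = 1`, because the recurrence at `n = p-2`, where the
leading coefficient vanishes, gives `4 Z_{p-1} ≡ 32 Z_{p-2}`.
-/

/-- The Zagier numbers `Z_n = ∑_{j=0}^n C(n,j) C(2j,j) C(2(n-j),n-j)`. -/
def zagierZ (n : ℕ) : ℤ :=
  ∑ j ∈ Finset.range (n + 1),
    (n.choose j : ℤ) * ((2 * j).choose j : ℤ) * ((2 * (n - j)).choose (n - j) : ℤ)

def zagierTerm (n j : ℕ) : ℤ :=
  (n.choose j : ℤ) * ((2 * j).choose j : ℤ) * ((2 * (n - j)).choose (n - j) : ℤ)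

/-- The telescoping certificate: applying the recurrence operator to `zagierTerm · j` gives
`zagierCert n (j + 1) - zagierCert n j`. The factor `j` is grouped with `C(n+1, j-1)` because it
annihilates the junk value `C(n+1, 0 - 1) = C(n+1, 0)` at `j = 0`. -/
def zagierCert (n j : ℕ) : ℤ :=
  2 * (2 * (n + 1) * j - (2 * n + 1) * (n + 2)) * (j * (n + 1).choose (j - 1) : ℕ)
    * ((2 * j).choose j : ℤ) * (catalan (n + 1 - j) : ℤ)

lemma cast_choose_add_add_one (j a : ℕ) :
    ((j + a + 1).choose j : ℚ) = (j + a + 1) / (a + 1) * (j + a).choose j := by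
  have h : ((j + a).choose j : ℚ) * (j + a + 1) = (j + a + 1).choose j * (a + 1) := by
    have := Nat.choose_mul_succ_eq (j + a) j
    rw [show j + a + 1 - j = a + 1 by omega] at this
    exact_mod_cast this
  field_simp
  linear_combination -h

lemma cast_choose_two_mul_succ (m : ℕ) :
    ((2 * (m + 1)).choose (m + 1) : ℚ) = 2 * (2 * m + 1) / (m + 1) * (2 * m).choose m := by
  have h : ((m : ℚ) + 1) * (2 * (m + 1)).choose (m + 1) = 2 * (2 * m + 1) * (2 * m).choose m := by
    exact_mod_cast Nat.succ_mul_centralBinom_succ m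
  field_simp
  linear_combination h

lemma cast_catalan_eq_div (m : ℕ) : (catalan m : ℚ) = (2 * m).choose m / (m + 1) := by
  have h : ((m : ℚ) + 1) * catalan m = (2 * m).choose m := by
    exact_mod_cast succ_mul_catalan_eq_centralBinom m
  field_simp
  linear_combination h

lemma mul_cast_choose_sub_one (j a : ℕ) :
    (j : ℚ) * (j + a + 1).choose (j - 1) = j ^ 2 / (a + 2) * (j + a + 1).choose j := by
  rcases j with _ | i
  · simp
  have h : ((i + 1 + a + 1).choose (i + 1) : ℚ) * (i + 1) = (i + 1 + a + 1).choose i * (a + 2) := by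
    have := Nat.choose_succ_right_eq (i + 1 + a + 1) i
    rw [show i + 1 + a + 1 - i = a + 2 by omega] at this
    exact_mod_cast this
  simp only [Nat.add_sub_cancel]
  field_simp
  push_cast
  linear_combination -h

lemma zagierTerm_recurrence (n j : ℕ) (hj : j ≤ n) :
    ((n : ℤ) + 2) ^ 2 * zagierTerm (n + 2) j
      - 4 * (3 * (n : ℤ) ^ 2 + 9 * n + 7) * zagierTerm (n + 1) j
      + 32 * ((n : ℤ) + 1) ^ 2 * zagierTerm n j = zagierCert n (j + 1) - zagierCert n j := by
  obtain ⟨a, rfl⟩ := Nat.exists_eq_add_of_le hj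
  have hchoose := cast_choose_add_add_one j (a + 1)
  simp only [← add_assoc] at hchoose
  simp only [zagierTerm, zagierCert, show j + a + 2 = j + a + 1 + 1 from rfl,
    Nat.add_sub_cancel_left, Nat.add_sub_cancel, show j + a + 1 + 1 - j = a + 1 + 1 by omega,
    show j + a + 1 - j = a + 1 by omega, show j + a + 1 - (j + 1) = a by omega]
  qify
  rw [mul_cast_choose_sub_one, hchoose, cast_choose_add_add_one, cast_catalan_eq_div,
    cast_catalan_eq_div, cast_choose_two_mul_succ (a + 1), cast_choose_two_mul_succ a,
    cast_choose_two_mul_succ j]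
  push_cast
  field_simp
  ring

lemma zagierCert_zero (n : ℕ) : zagierCert n 0 = 0 := by
  simp [zagierCert]

lemma zagierCert_boundary (n : ℕ) :
    zagierCert n (n + 1)
      + ((n : ℤ) + 2) ^ 2 * (zagierTerm (n + 2) (n + 1) + zagierTerm (n + 2) (n + 2))
      - 4 * (3 * (n : ℤ) ^ 2 + 9 * n + 7) * zagierTerm (n + 1) (n + 1) = 0 := by
  simp only [zagierTerm, zagierCert, Nat.sub_self, Nat.choose_self, Nat.choose_succ_self_right,
    Nat.add_sub_cancel, Nat.mul_zero, catalan_zero, show n + 2 - (n + 1) = 1 by omega,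
    show n + 1 - (n + 1) = 0 by omega, show n + 2 = n + 1 + 1 from rfl]
  qify
  rw [cast_choose_two_mul_succ (n + 1)]
  push_cast
  field_simp
  ring

lemma zagierZ_recurrence (n : ℕ) :
    ((n : ℤ) + 2) ^ 2 * zagierZ (n + 2)
      = 4 * (3 * (n : ℤ) ^ 2 + 9 * n + 7) * zagierZ (n + 1) - 32 * ((n : ℤ) + 1) ^ 2 * zagierZ n := by
  have telescope : ∑ j ∈ Finset.range (n + 1),
      (((n : ℤ) + 2) ^ 2 * zagierTerm (n + 2) j
        - 4 * (3 * (n : ℤ) ^ 2 + 9 * n + 7) * zagierTerm (n + 1) j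
        + 32 * ((n : ℤ) + 1) ^ 2 * zagierTerm n j) = zagierCert n (n + 1) := by
    rw [Finset.sum_congr rfl fun j hj => zagierTerm_recurrence n j (Finset.mem_range_succ_iff.mp hj),
      Finset.sum_range_sub, zagierCert_zero, sub_zero]
  rw [Finset.sum_add_distrib, Finset.sum_sub_distrib, ← Finset.mul_sum, ← Finset.mul_sum,
    ← Finset.mul_sum] at telescope
  have hZ : ∀ m, zagierZ m = ∑ j ∈ Finset.range (m + 1), zagierTerm m j := fun _ => rfl
  rw [hZ, hZ, hZ, Finset.sum_range_succ _ (n + 2), Finset.sum_range_succ _ (n + 1),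
    Finset.sum_range_succ _ (n + 1)]
  linear_combination telescope + zagierCert_boundary n

lemma zagierZ_zero : zagierZ 0 = 1 := by
  simp [zagierZ]

lemma zagierZ_one : zagierZ 1 = 4 := by
  simp [zagierZ, Finset.sum_range_succ]

section ModP

variable {p : ℕ}

lemma four_mul_cast_zagierZ_sub_one (hp : 2 ≤ p) :
    4 * (zagierZ (p - 1) : ZMod p) = 32 * zagierZ (p - 2) := by
  have h := congrArg (Int.cast : ℤ → ZMod p) (zagierZ_recurrence (p - 2))
  have hcast : ((p - 2 : ℕ) : ZMod p) = -2 := by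
    rw [Nat.cast_sub hp, ZMod.natCast_self, Nat.cast_ofNat, zero_sub]
  rw [show p - 2 + 1 = p - 1 by omega] at h
  push_cast at h
  rw [hcast] at h
  linear_combination -h

variable [Fact p.Prime]

lemma cast_choose_sub_one {j : ℕ} (hj : j < p) : (((p - 1).choose j : ℕ) : ZMod p) = (-1) ^ j := by
  have h := ZMod.cast_descFactorial (p := p) hj.le
  rw [Nat.descFactorial_eq_factorial_mul_choose, Nat.cast_mul, mul_comm] at h
  refine mul_right_cancel₀ ?_ h
  rw [Ne, ZMod.natCast_eq_zero_iff, (Fact.out : p.Prime).dvd_factorial]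
  omega

lemma cast_choose_two_mul_eq_zero {j : ℕ} (hj : j < p) (hpj : p ≤ 2 * j) :
    (((2 * j).choose j : ℕ) : ZMod p) = 0 := by
  rw [ZMod.natCast_eq_zero_iff, two_mul]
  exact (Fact.out : p.Prime).dvd_choose_add hj hj (by omega)

lemma cast_zagierZ_sub_one (hp : Odd p) : (zagierZ (p - 1) : ZMod p) = (-1) ^ (p / 2) := by
  obtain ⟨m, hm⟩ := hp
  rw [show p / 2 = m by omega, zagierZ]
  push_cast
  rw [Finset.sum_eq_single_of_mem m (by simp; omega)]
  · rw [show p - 1 - m = m by omega, show 2 * m = p - 1 by omega, cast_choose_sub_one (by omega)]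
    rcases neg_one_pow_eq_or (ZMod p) m with h | h <;> rw [h] <;> norm_num
  intro j hj hjm
  rw [Finset.mem_range] at hj
  rcases Nat.lt_or_gt_of_ne hjm with hlt | hgt
  · rw [cast_choose_two_mul_eq_zero (j := p - 1 - j) (by omega) (by omega), mul_zero]
  · rw [cast_choose_two_mul_eq_zero (j := j) (by omega) (by omega), mul_zero, zero_mul]

lemma cast_zagierZ_reflect_step {c : ZMod p} {j : ℕ} (hj : j + 2 < p)
    (h₀ : (zagierZ j : ZMod p) = c * 32 ^ j * zagierZ (p - 1 - j))
    (h₁ : (zagierZ (j + 1) : ZMod p) = c * 32 ^ (j + 1) * zagierZ (p - 1 - (j + 1))) :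
    (zagierZ (j + 2) : ZMod p) = c * 32 ^ (j + 2) * zagierZ (p - 1 - (j + 2)) := by
  obtain ⟨q, hq⟩ : ∃ q, p = q + j + 3 := ⟨p - (j + 3), by omega⟩
  rw [show p - 1 - j = q + 2 by omega] at h₀
  rw [show p - 1 - (j + 1) = q + 1 by omega] at h₁
  rw [show p - 1 - (j + 2) = q by omega]
  have hq_cast : (q : ZMod p) = -(j + 3) := by
    have h : ((q + j + 3 : ℕ) : ZMod p) = 0 := by rw [← hq, ZMod.natCast_self]
    push_cast at h
    linear_combination h
  have hrec_j := congrArg (Int.cast : ℤ → ZMod p) (zagierZ_recurrence j)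
  have hrec_q := congrArg (Int.cast : ℤ → ZMod p) (zagierZ_recurrence q)
  push_cast at hrec_j hrec_q
  rw [hq_cast] at hrec_q
  have hj2 : (j : ZMod p) + 2 ≠ 0 := by
    rw [← Nat.cast_ofNat, ← Nat.cast_add, Ne, ZMod.natCast_eq_zero_iff]
    exact Nat.not_dvd_of_pos_of_lt (by omega) hj
  apply mul_left_cancel₀ (pow_ne_zero 2 hj2)
  linear_combination hrec_j + 4 * (3 * (j : ZMod p) ^ 2 + 9 * j + 7) * h₁
    - 32 * ((j : ZMod p) + 1) ^ 2 * h₀ - c * 32 ^ (j + 1) * hrec_q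

lemma cast_zagierZ_eq_mul_cast_zagierZ_sub {c : ZMod p}
    (hc : (zagierZ (p - 1) : ZMod p) = c) (hc2 : c ^ 2 = 1) :
    ∀ k < p, (zagierZ k : ZMod p) = c * 32 ^ k * zagierZ (p - 1 - k)
  | 0, _ => by
    rw [zagierZ_zero, Nat.sub_zero, hc]
    push_cast
    linear_combination -hc2
  | 1, _ => by
    have h := four_mul_cast_zagierZ_sub_one (Fact.out : p.Prime).two_le
    rw [hc] at h
    rw [zagierZ_one, show p - 1 - 1 = p - 2 by omega]
    push_cast
    linear_combination c * h - 4 * hc2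
  | j + 2, hj => cast_zagierZ_reflect_step hj
      (cast_zagierZ_eq_mul_cast_zagierZ_sub hc hc2 j (by omega))
      (cast_zagierZ_eq_mul_cast_zagierZ_sub hc hc2 (j + 1) (by omega))

end ModP

theorem stmt_17 (p : ℕ) [Fact p.Prime] (hp : Odd p) (k : ℕ) (hk : k < p) :
    zagierZ k ≡ legendreSym p (-1) * 32 ^ k * zagierZ (p - 1 - k) [ZMOD (p : ℤ)] := by
  rw [← ZMod.intCast_eq_intCast_iff]
  push_cast
  rw [legendreSym.eq_pow]
  push_cast
  refine cast_zagierZ_eq_mul_cast_zagierZ_sub (cast_zagierZ_sub_one hp) ?_ k hk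
  rw [← pow_mul, mul_comm, pow_mul, neg_one_sq, one_pow]
end

section
/- For every nonnegative integer n, sum over k from 0 to n of (9k+2) * C(2k,k) * C(3k,k) / 27^k equals (3n+1)(3n+2) * C(2n,n) * C(3n,n) / 27^n. -/
lemma L2 (n : ℕ) : (n+1)^2 * (2*(n+1)).choose (n+1) = (2*n+1)*(2*n+2) * ((2*n).choose n) := by
  have h1 := Nat.add_one_mul_choose_eq (2*n+1) n
  have h2 := Nat.add_one_mul_choose_eq (2*n) n
  have hs : (2*n+1).choose n = (2*n+1).choose (n+1) := by
    have := Nat.choose_symm (n := 2*n+1) (k := n+1) (by omega)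
    simpa [show 2*n+1-(n+1) = n by omega] using this
  have e : 2*(n+1) = 2*n+1+1 := by ring
  rw [e]
  zify at h1 h2 hs ⊢
  linear_combination (-((n:ℤ)+1)) * h1 + ((n:ℤ)+1)*(2*n+2) * hs + (-((2:ℤ)*n+2)) * h2

lemma L3 (n : ℕ) : (n+1)*(2*n+1)*(2*n+2) * (3*(n+1)).choose (n+1) =
    (3*n+1)*(3*n+2)*(3*n+3) * ((3*n).choose n) := by
  have h1 := Nat.add_one_mul_choose_eq (3*n+2) n
  have h2 := Nat.choose_mul_succ_eq (3*n+1) n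
  have h3 := Nat.choose_mul_succ_eq (3*n) n
  simp only [Nat.succ_eq_add_one, show 3*n+1+1-n = 2*n+2 by omega,
    show 3*n+1-n = 2*n+1 by omega] at h1 h2 h3
  have e : 3*(n+1) = 3*n+2+1 := by ring
  rw [e]
  zify at h1 h2 h3 ⊢
  linear_combination (-((2:ℤ)*n+1)*(2*n+2)) * h1 + (-((2:ℤ)*n+1)*(3*n+3)) * h2 +
    (-((3:ℤ)*n+2)*(3*n+3)) * h3

theorem stmt_19 (n : ℕ) :
    ∑ k ∈ Finset.range (n + 1),
      (9 * (k : ℚ) + 2) * ((2 * k).choose k : ℚ) * ((3 * k).choose k : ℚ) / 27 ^ k =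
      (3 * (n : ℚ) + 1) * (3 * (n : ℚ) + 2) * ((2 * n).choose n : ℚ) * ((3 * n).choose n : ℚ) /
        27 ^ n := by
  induction n with
  | zero => norm_num
  | succ n ih =>
    rw [Finset.sum_range_succ, ih]
    have h2 : ((n:ℚ)+1)^2 * ((2*(n+1)).choose (n+1) : ℚ)
        = (2*n+1)*(2*n+2) * ((2*n).choose n : ℚ) := by
      exact_mod_cast congrArg (Nat.cast : ℕ → ℚ) (L2 n)
    have h3 : ((n:ℚ)+1)*(2*n+1)*(2*n+2) * ((3*(n+1)).choose (n+1) : ℚ)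
        = (3*n+1)*(3*n+2)*(3*n+3) * ((3*n).choose n : ℚ) := by
      exact_mod_cast congrArg (Nat.cast : ℕ → ℚ) (L3 n)
    have hne : ((n:ℚ)+1)*(2*(n:ℚ)+1)*(2*(n:ℚ)+2) ≠ 0 := by positivity
    have hkey : ((n:ℚ)+1)^2 * (((2*(n+1)).choose (n+1) : ℚ) * ((3*(n+1)).choose (n+1) : ℚ))
        = 3*(3*(n:ℚ)+1)*(3*(n:ℚ)+2) * (((2*n).choose n : ℚ) * ((3*n).choose n : ℚ)) := by
      apply mul_left_cancel₀ hne
      linear_combination (((n:ℚ)+1)^2 * ((2*(n+1)).choose (n+1) : ℚ)) * h3 +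
        ((3*(n:ℚ)+1)*(3*(n:ℚ)+2)*(3*(n:ℚ)+3) * ((3*n).choose n : ℚ)) * h2
    have hn1 : ((n:ℚ)+1) ≠ 0 := by positivity
    have h27 : (27:ℚ)^n ≠ 0 := by positivity
    push_cast
    field_simp
    linear_combination (-9 * (27:ℚ)^n) * hkey
end
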